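/- arXiv:2405.05895 — 5 statements merged into one kernel-verified Lean document; each statement's English description precedes it below -/
import Mathlib

section
/- Let a, b ≥ 0 with |a − b| ≥ 2. Then with m = (a+b+3)(a+1)(b+2)/2 and n = (a+b+3)(a+2)(b+1)/2, we have ⌈(m+n+a+b+3)/2⌉ ≤ max(m, n). -/
/-!
Both `m` and `n` are integers, and `m - n = (a + b + 3)(a - b) / 2`. Since
`2 * max m n = m + n + |m - n|` and `max m n` is an integer, the claim reduces to
`a + b + 3 ≤ |m - n| = (a + b + 3) |a - b| / 2`, i.e. to `2 ≤ |a - b|`.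
-/

theorem Int.even_mul_mul_add (x y : ℤ) : Even (x * y * (x + y)) := by
  simp only [Int.even_mul, Int.even_add]
  tauto

theorem Int.exists_cast_eq_add_mul_mul_div_two (x y : ℤ) :
    ∃ k : ℤ, (k : ℚ) = (x + y) * x * y / 2 := by
  obtain ⟨k, hk⟩ := Int.even_mul_mul_add x y
  refine ⟨k, ?_⟩
  have hk' : ((x * y * (x + y) : ℤ) : ℚ) = k + k := by exact_mod_cast hk
  push_cast at hk'
  linarith

theorem add_add_div_two_le_max {K : Type*} [Field K] [LinearOrder K] [IsStrictOrderedRing K]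
    {m n c : K} (h : c ≤ |m - n|) : (m + n + c) / 2 ≤ max m n := by
  rcases le_total n m with hnm | hmn
  · rw [max_eq_left hnm, abs_of_nonneg (sub_nonneg.2 hnm)] at *
    linarith
  · rw [max_eq_right hmn, abs_of_nonpos (sub_nonpos.2 hmn)] at *
    linarith

theorem stmt8 (a b : ℤ) (ha : 0 ≤ a) (hb : 0 ≤ b) (hab : 2 ≤ |a - b|) (m n : ℚ)
    (hm : m = ((a + b + 3) * (a + 1) * (b + 2) : ℚ) / 2)
    (hn : n = ((a + b + 3) * (a + 2) * (b + 1) : ℚ) / 2) :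
    (⌈(m + n + a + b + 3) / 2⌉ : ℚ) ≤ max m n := by
  obtain ⟨p, hp⟩ := Int.exists_cast_eq_add_mul_mul_div_two (a + 1) (b + 2)
  obtain ⟨q, hq⟩ := Int.exists_cast_eq_add_mul_mul_div_two (a + 2) (b + 1)
  have hmp : m = p := by rw [hm, hp]; push_cast; ring
  have hnq : n = q := by rw [hn, hq]; push_cast; ring
  have hpos : (0 : ℚ) ≤ a + b + 3 := by
    have : (0 : ℤ) ≤ a + b + 3 := by omega
    exact_mod_cast this
  have hab' : (2 : ℚ) ≤ |(a : ℚ) - b| := by exact_mod_cast hab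
  have hgap : (a + b + 3 : ℚ) ≤ |m - n| :=
    calc (a + b + 3 : ℚ) ≤ (a + b + 3) * |(a : ℚ) - b| / 2 := by nlinarith
      _ = |m - n| := by
        rw [show m - n = (a + b + 3) * (a - b) / 2 by rw [hm, hn]; ring, abs_div, abs_mul,
          abs_of_nonneg hpos, abs_two]
  have hle : (m + n + a + b + 3) / 2 ≤ max m n :=
    calc (m + n + a + b + 3) / 2 = (m + n + (a + b + 3)) / 2 := by ring
      _ ≤ max m n := add_add_div_two_le_max hgap
  rw [hmp, hnq, ← Int.cast_max] at hle ⊢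
  exact_mod_cast Int.ceil_le.2 hle
end

section
/- Let V = ℂ^k with basis e₁,…,e_k and dual basis α₁,…,α_k, and let T_k = Σ_{i<j} (α_i⊗α_j − α_j⊗α_i)⊗(e_i∧e_j) ∈ V*⊗V*⊗Λ²V. Then T_k − T_{k−1} = lim_{t→0} (1/t)[ Σ_{j=1}^{k−1} (α_k + tα_j)⊗(α_k − tα_j)⊗(e_j∧e_k) − α_k⊗α_k⊗(Σ_{i=1}^{k−1} e_i∧e_k) ], where T_{k−1} denotes the analogous sum over 1 ≤ i < j ≤ k−1. In particular T_k − T_{k−1} has border rank at most k. -/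
open Filter Topology

/-- Standard basis vector `e_i` of `ℂ^k` (identified with its dual basis vector `α_i`). -/
noncomputable def basisVec (k : ℕ) (i : Fin k) : Fin k → ℂ := Pi.single i 1

/-- The wedge `e_p ∧ e_q`, realized as the antisymmetric matrix `E_{pq} - E_{qp}`. -/
noncomputable def wedge (k : ℕ) (p q : Fin k) : Fin k → Fin k → ℂ :=
  fun c d => basisVec k p c * basisVec k q d - basisVec k q c * basisVec k p d

/-- The rank-one tensor `u ⊗ v ⊗ w` in `V* ⊗ V* ⊗ Λ²V`, in coordinates. -/
noncomputable def tri (k : ℕ) (u v : Fin k → ℂ) (w : Fin k → Fin k → ℂ) :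
    Fin k → Fin k → Fin k → Fin k → ℂ :=
  fun a b c d => u a * v b * w c d

/-- `T r = Σ_{i<j, j<r} (α_i ⊗ α_j - α_j ⊗ α_i) ⊗ (e_i ∧ e_j)`; for `r = k` this is `T_k`,
and for `r = k - 1` it is the copy of `T_{k-1}` inside `V* ⊗ V* ⊗ Λ²V`. -/
noncomputable def T (k : ℕ) (r : ℕ) : Fin k → Fin k → Fin k → Fin k → ℂ :=
  ∑ i : Fin k, ∑ j : Fin k,
    if i < j ∧ (j : ℕ) < r then
      tri k (basisVec k i) (basisVec k j) (wedge k i j)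
        - tri k (basisVec k j) (basisVec k i) (wedge k i j)
    else 0


/-!
Expanding `(α_k + t α_j) ⊗ (α_k - t α_j) = α_k ⊗ α_k + t (α_j ⊗ α_k - α_k ⊗ α_j) - t² α_j ⊗ α_j`,
the `α_k ⊗ α_k` terms cancel against the correction term, so the bracket equals
`t (T_k - T_{k-1}) - t² E` for a fixed tensor `E`; after dividing by `t` the limit is immediate.
For `t ≠ 0` the quotient is the sum of the `k - 1` rank-one tensors
`t⁻¹ (α_k + t α_j) ⊗ (α_k - t α_j) ⊗ (e_j ∧ e_k)` and the single rank-one tensor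
`α_k ⊗ (-t⁻¹ α_k) ⊗ Σ_i e_i ∧ e_k`, so `T_k - T_{k-1}` is a limit of tensors of rank at most `k`.
-/

open Finset

noncomputable def wedgeTerm (k : ℕ) (i j : Fin k) : Fin k → Fin k → Fin k → Fin k → ℂ :=
  tri k (basisVec k i) (basisVec k j) (wedge k i j)
    - tri k (basisVec k j) (basisVec k i) (wedge k i j)

noncomputable def wedgeColumn (k : ℕ) (j : Fin k) : Fin k → Fin k → Fin k → Fin k → ℂ :=
  ∑ i : Fin k, if i < j then wedgeTerm k i j else 0

lemma T_eq_sum_wedgeColumn (k r : ℕ) :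
    T k r = ∑ j : Fin k, if (j : ℕ) < r then wedgeColumn k j else 0 := by
  rw [T, sum_comm]
  refine sum_congr rfl fun j _ => ?_
  split_ifs with hj <;> simp [wedgeColumn, wedgeTerm, hj]

lemma T_succ_sub {k : ℕ} (j : Fin k) : T k (j + 1) - T k j = wedgeColumn k j := by
  rw [T_eq_sum_wedgeColumn, T_eq_sum_wedgeColumn, ← sum_sub_distrib]
  have hterm : ∀ i : Fin k, ((if (i : ℕ) < j + 1 then wedgeColumn k i else 0)
      - if (i : ℕ) < j then wedgeColumn k i else 0) = if i = j then wedgeColumn k j else 0 := by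
    intro i
    rcases lt_trichotomy i j with h | rfl | h
    · simp [h.ne, Fin.lt_def.mp h, Nat.lt_succ_of_lt (Fin.lt_def.mp h)]
    · simp
    · simp [h.ne', Nat.not_lt.mpr (Fin.lt_def.mp h).le, Nat.not_lt.mpr (Fin.lt_def.mp h)]
  simp only [hterm, sum_ite_eq', mem_univ, if_true]

section Tri

variable {k : ℕ}

lemma tri_smul_left (r : ℂ) (u v : Fin k → ℂ) (w : Fin k → Fin k → ℂ) :
    tri k (r • u) v w = r • tri k u v w := by
  funext a b c d
  simp only [tri, Pi.smul_apply, smul_eq_mul]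
  ring

lemma tri_smul_middle (r : ℂ) (u v : Fin k → ℂ) (w : Fin k → Fin k → ℂ) :
    tri k u (r • v) w = r • tri k u v w := by
  funext a b c d
  simp only [tri, Pi.smul_apply, smul_eq_mul]
  ring

lemma tri_sum_right {ι : Type*} (s : Finset ι) (u v : Fin k → ℂ)
    (w : ι → Fin k → Fin k → ℂ) :
    tri k u v (∑ i ∈ s, w i) = ∑ i ∈ s, tri k u v (w i) := by
  funext a b c d
  simp only [tri, Finset.sum_apply, mul_sum]

lemma tri_zero_right (u v : Fin k → ℂ) : tri k u v 0 = 0 := by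
  funext a b c d
  simp [tri]

lemma tri_add_smul_sub_smul (x y : Fin k → ℂ) (t : ℂ) (w : Fin k → Fin k → ℂ) :
    tri k (x + t • y) (x - t • y) w
      = tri k x x w + t • (tri k y x w - tri k x y w) - t ^ 2 • tri k y y w := by
  funext a b c d
  simp only [tri, Pi.add_apply, Pi.sub_apply, Pi.smul_apply, smul_eq_mul]
  ring

end Tri

def skewMatrices (k : ℕ) : Submodule ℂ (Fin k → Fin k → ℂ) where
  carrier := {w | ∀ c d, w c d = -w d c}
  add_mem' {w w'} hw hw' c d := by simp [hw c d, hw' c d, add_comm]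
  zero_mem' c d := by simp
  smul_mem' r w hw c d := by simp [hw c d]

lemma wedge_mem_skewMatrices (k : ℕ) (p q : Fin k) : wedge k p q ∈ skewMatrices k := by
  intro c d
  simp only [wedge]
  ring

def rankLeSet (k : ℕ) : Set (Fin k → Fin k → Fin k → Fin k → ℂ) :=
  {x | ∃ (u v : Fin k → (Fin k → ℂ)) (w : Fin k → (Fin k → Fin k → ℂ)),
    (∀ i, w i ∈ skewMatrices k) ∧ x = ∑ i : Fin k, tri k (u i) (v i) (w i)}

lemma sum_ite_lt_add_tri_mem_rankLeSet {k : ℕ} (last : Fin k) (u v : Fin k → Fin k → ℂ)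
    (w : Fin k → Fin k → Fin k → ℂ) (hw : ∀ j, w j ∈ skewMatrices k)
    (a b : Fin k → ℂ) (c : Fin k → Fin k → ℂ) (hc : c ∈ skewMatrices k) :
    (∑ j : Fin k, if j < last then tri k (u j) (v j) (w j) else 0) + tri k a b c
      ∈ rankLeSet k := by
  refine ⟨fun j => if j = last then a else if j < last then u j else 0,
    fun j => if j = last then b else if j < last then v j else 0,
    fun j => if j = last then c else if j < last then w j else 0, fun j => ?_, ?_⟩
  · dsimp only
    split_ifs
    exacts [hc, hw j, zero_mem _]
  · have hterm : ∀ j : Fin k, tri k (if j = last then a else if j < last then u j else 0)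
        (if j = last then b else if j < last then v j else 0)
        (if j = last then c else if j < last then w j else 0)
        = (if j < last then tri k (u j) (v j) (w j) else 0)
          + if j = last then tri k a b c else 0 := by
      intro j
      split_ifs with h h'
      · exact absurd (h ▸ h') (lt_irrefl _)
      · simp
      · simp
      · simp [tri_zero_right]
    simp only [hterm, sum_add_distrib, sum_ite_eq', mem_univ, if_true]

section Degeneration

variable {k : ℕ} (last : Fin k)

noncomputable def degeneration (t : ℂ) : Fin k → Fin k → Fin k → Fin k → ℂ :=
  (∑ j : Fin k, if j < last then
      tri k (basisVec k last + t • basisVec k j) (basisVec k last - t • basisVec k j)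
        (wedge k j last)
    else 0)
    - tri k (basisVec k last) (basisVec k last)
        (∑ i : Fin k, if i < last then wedge k i last else 0)

lemma degeneration_eq_smul (t : ℂ) :
    degeneration last t = t • (wedgeColumn k last - t • ∑ j : Fin k,
      if j < last then tri k (basisVec k j) (basisVec k j) (wedge k j last) else 0) := by
  simp only [degeneration, wedgeColumn, tri_sum_right, smul_sum, smul_sub, ← sum_sub_distrib]
  refine sum_congr rfl fun j _ => ?_
  split_ifs
  · rw [tri_add_smul_sub_smul, wedgeTerm]
    module
  · simp [tri_zero_right]

lemma tendsto_inv_smul_degeneration :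
    Tendsto (fun t : ℂ => t⁻¹ • degeneration last t) (𝓝[≠] 0) (𝓝 (wedgeColumn k last)) := by
  set E := ∑ j : Fin k,
    if j < last then tri k (basisVec k j) (basisVec k j) (wedge k j last) else 0
  have hline : Tendsto (fun t : ℂ => wedgeColumn k last - t • E) (𝓝 0)
      (𝓝 (wedgeColumn k last)) := by
    simpa using tendsto_const_nhds.sub ((tendsto_id (x := 𝓝 (0 : ℂ))).smul_const E)
  refine (hline.mono_left nhdsWithin_le_nhds).congr' ?_
  filter_upwards [self_mem_nhdsWithin] with t ht
  rw [degeneration_eq_smul, smul_smul, inv_mul_cancel₀ ht, one_smul]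

lemma inv_smul_degeneration_mem_rankLeSet (t : ℂ) :
    t⁻¹ • degeneration last t ∈ rankLeSet k := by
  have hsplit : t⁻¹ • degeneration last t
      = (∑ j : Fin k, if j < last then
          tri k (t⁻¹ • (basisVec k last + t • basisVec k j))
            (basisVec k last - t • basisVec k j) (wedge k j last)
        else 0)
        + tri k (basisVec k last) (-t⁻¹ • basisVec k last)
            (∑ i : Fin k, if i < last then wedge k i last else 0) := by
    rw [degeneration, smul_sub, smul_sum, sub_eq_add_neg, tri_smul_middle, neg_smul]
    simp only [smul_ite, smul_zero, tri_smul_left]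
  refine hsplit ▸ sum_ite_lt_add_tri_mem_rankLeSet last _ _ _
    (fun j => wedge_mem_skewMatrices k j last) _ _ _ (sum_mem fun i _ => ?_)
  split_ifs
  exacts [wedge_mem_skewMatrices k i last, zero_mem _]

end Degeneration

theorem stmt11_general (k : ℕ) (last : Fin k) (hlast : (last : ℕ) = k - 1) :
    Tendsto
      (fun t : ℂ => t⁻¹ •
        ((∑ j : Fin k, if (j : ℕ) < k - 1 then
            tri k (basisVec k last + t • basisVec k j) (basisVec k last - t • basisVec k j)
              (wedge k j last)
          else 0)
          - tri k (basisVec k last) (basisVec k last)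
              (∑ i : Fin k, if (i : ℕ) < k - 1 then wedge k i last else 0)))
      (𝓝[≠] (0 : ℂ)) (𝓝 (T k k - T k (k - 1))) ∧
    (T k k - T k (k - 1)) ∈
      closure {x : Fin k → Fin k → Fin k → Fin k → ℂ |
        ∃ (u v : Fin k → (Fin k → ℂ)) (w : Fin k → (Fin k → Fin k → ℂ)),
          (∀ i c d, w i c d = - w i d c) ∧ x = ∑ i : Fin k, tri k (u i) (v i) (w i)} := by
  have hlt : ∀ j : Fin k, (j : ℕ) < k - 1 ↔ j < last := fun j => by rw [Fin.lt_def, hlast]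
  have hT : T k k - T k (k - 1) = wedgeColumn k last := by
    have hk : k = last + 1 := by omega
    simpa [← hlast, ← hk] using T_succ_sub last
  simp only [hlt, hT]
  have hlim := tendsto_inv_smul_degeneration last
  exact ⟨hlim, mem_closure_of_tendsto hlim
    (Eventually.of_forall (inv_smul_degeneration_mem_rankLeSet last))⟩

theorem stmt11 (k : ℕ) (hk : 2 ≤ k) (last : Fin k) (hlast : (last : ℕ) = k - 1) :
    Tendsto
      (fun t : ℂ => t⁻¹ •
        ((∑ j : Fin k, if (j : ℕ) < k - 1 then
            tri k (basisVec k last + t • basisVec k j) (basisVec k last - t • basisVec k j)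
              (wedge k j last)
          else 0)
          - tri k (basisVec k last) (basisVec k last)
              (∑ i : Fin k, if (i : ℕ) < k - 1 then wedge k i last else 0)))
      (𝓝[≠] (0 : ℂ)) (𝓝 (T k k - T k (k - 1))) ∧
    (T k k - T k (k - 1)) ∈
      closure {x : Fin k → Fin k → Fin k → Fin k → ℂ |
        ∃ (u v : Fin k → (Fin k → ℂ)) (w : Fin k → (Fin k → Fin k → ℂ)),
          (∀ i c d, w i c d = - w i d c) ∧ x = ∑ i : Fin k, tri k (u i) (v i) (w i)} :=
  stmt11_general k last hlast
end

section
/- Let ζ be a primitive third root of unity in ℂ. Consider the Hankel (catalecticant) matrices M(s,t) = [[s⁴, s³t, s²t²],[s³t, s²t², st³],[s²t², st³, t⁴]]. Then every nonzero M(s,t) has rank one, and the five matrices M(1,0), M(1,1), M(1,ζ), M(1,ζ²), M(0,1) are linearly independent in the 5-dimensional space of 3×3 Hankel matrices {[[x₀,x₁,x₂],[x₁,x₂,x₃],[x₂,x₃,x₄]]}. -/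
/-- The Hankel (catalecticant) matrix coming from the degree-four Veronese embedding. -/
noncomputable def M (s t : ℂ) : Matrix (Fin 3) (Fin 3) ℂ :=
  !![s ^ 4, s ^ 3 * t, s ^ 2 * t ^ 2;
     s ^ 3 * t, s ^ 2 * t ^ 2, s * t ^ 3;
     s ^ 2 * t ^ 2, s * t ^ 3, t ^ 4]

/-!
`M s t = v vᵀ` for `v = (s², st, t²)`, so it has rank at most one, and rank zero only if it
vanishes. The entries `x₀, x₁, x₂, x₃` of `M 1 a` form the Vandermonde row `(1, a, a², a³)`, so
for the distinct values `a = 0, 1, ζ, ζ²` the four matrices `M 1 a` are independent already after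
projecting to these entries, while `M 0 1` is nonzero and lies in the kernel of that projection.
-/

open Matrix

theorem Matrix.rank_eq_zero_iff {m n K : Type*} [Fintype m] [Fintype n] [DecidableEq n] [Field K]
    {A : Matrix m n K} : A.rank = 0 ↔ A = 0 := by
  rw [Matrix.rank, Submodule.finrank_eq_zero, LinearMap.range_eq_bot, ← Matrix.toLin'_apply',
    map_eq_zero_iff _ Matrix.toLin'.injective]

theorem linearIndependent_finSnoc_of_comp {K V W : Type*} [DivisionRing K] [AddCommGroup V] [Module K V]
    [AddCommGroup W] [Module K W] {n : ℕ} {v : Fin n → V} {w : V} (f : V →ₗ[K] W)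
    (hv : LinearIndependent K (f ∘ v)) (hw : w ≠ 0) (hfw : f w = 0) :
    LinearIndependent K (Fin.snoc v w : Fin (n + 1) → V) := by
  refine linearIndependent_finSnoc.mpr ⟨hv.of_comp, fun hmem => hw ?_⟩
  obtain ⟨c, rfl⟩ := Submodule.mem_span_range_iff_exists_fun K |>.mp hmem
  have hc : c = 0 := by
    ext i
    refine Fintype.linearIndependent_iff.mp hv c ?_ i
    simpa [map_sum] using hfw
  simp [hc]

lemma M_eq_vecMulVec (s t : ℂ) :
    M s t = vecMulVec ![s ^ 2, s * t, t ^ 2] ![s ^ 2, s * t, t ^ 2] := by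
  ext i j
  fin_cases i <;> fin_cases j <;> simp [M, vecMulVec] <;> ring

lemma rank_M_of_ne_zero {s t : ℂ} (h : M s t ≠ 0) : (M s t).rank = 1 :=
  le_antisymm (M_eq_vecMulVec s t ▸ rank_vecMulVec_le _ _)
    (Nat.one_le_iff_ne_zero.mpr (Matrix.rank_eq_zero_iff.not.mpr h))

/-- The entries `x₀, x₁, x₂, x₃` of a Hankel matrix `[[x₀,x₁,x₂],[x₁,x₂,x₃],[x₂,x₃,x₄]]`. -/
def hankelHead : Matrix (Fin 3) (Fin 3) ℂ →ₗ[ℂ] Fin 4 → ℂ :=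
  LinearMap.pi fun j => entryLinearMap ℂ ℂ (![0, 0, 0, 1] j) (![0, 1, 2, 2] j)

lemma hankelHead_M_one (a : ℂ) : hankelHead (M 1 a) = fun j : Fin 4 => a ^ (j : ℕ) := by
  ext j; fin_cases j <;> simp [hankelHead, M]

lemma hankelHead_M_zero_one : hankelHead (M 0 1) = 0 := by
  ext j; fin_cases j <;> simp [hankelHead, M]

lemma M_zero_one_ne_zero : M 0 1 ≠ 0 := fun h => by
  simpa [M] using congrFun (congrFun h 2) 2

lemma linearIndependent_hankelHead_M_one {a : Fin 4 → ℂ} (ha : Function.Injective a) :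
    LinearIndependent ℂ (hankelHead ∘ fun i => M 1 (a i)) := by
  have hrows : (hankelHead ∘ fun i => M 1 (a i)) = (vandermonde a).row := by
    ext i : 1
    simp [hankelHead_M_one, vandermonde]
  rw [hrows]
  exact linearIndependent_rows_of_det_ne_zero (det_vandermonde_ne_zero_iff.mpr ha)

lemma IsPrimitiveRoot.injective_zero_one_self_sq {ζ : ℂ} (hζ : IsPrimitiveRoot ζ 3) :
    Function.Injective ![0, 1, ζ, ζ ^ 2] := by
  have hpowers : ![1, ζ, ζ ^ 2] = fun k : Fin 3 => ζ ^ (k : ℕ) := by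
    ext k; fin_cases k <;> simp
  refine Fin.cons_injective_iff.mpr ⟨?_, ?_⟩ <;> rw [hpowers]
  · rintro ⟨k, hk⟩
    exact pow_ne_zero _ (hζ.ne_zero (by norm_num)) hk
  · intro i j hij
    exact Fin.ext (hζ.pow_inj i.isLt j.isLt hij)

theorem stmt14 (ζ : ℂ) (hζ : IsPrimitiveRoot ζ 3) :
    (∀ s t : ℂ, M s t ≠ 0 → (M s t).rank = 1) ∧
      LinearIndependent ℂ ![M 1 0, M 1 1, M 1 ζ, M 1 (ζ ^ 2), M 0 1] := by
  refine ⟨fun s t => rank_M_of_ne_zero, ?_⟩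
  have hsnoc : ![M 1 0, M 1 1, M 1 ζ, M 1 (ζ ^ 2), M 0 1] =
      Fin.snoc (fun i => M 1 (![0, 1, ζ, ζ ^ 2] i)) (M 0 1) := by
    ext i : 1
    fin_cases i <;> rfl
  rw [hsnoc]
  exact linearIndependent_finSnoc_of_comp hankelHead
    (linearIndependent_hankelHead_M_one hζ.injective_zero_one_self_sq) M_zero_one_ne_zero
    hankelHead_M_zero_one
end

section
/- Let V = ℂ^k (k ≥ 2) with the tensor T_k = Σ_{i<j} (α_i⊗α_j − α_j⊗α_i)⊗(e_i∧e_j) ∈ V*⊗V*⊗Λ²V viewed as the linear map T_k: Λ²V* → V*⊗V* (inclusion of skew-symmetric matrices). Then the first Koszul flattening T_k^∧1: V*⊗Λ²V* → Λ²V*⊗V*, defined by sending ω⊗η to the image of ω⊗T_k(η) under the skew-symmetrization map V*⊗V*⊗V* → Λ²V*⊗V* on the first two factors, is surjective; its rank is k·C(k,2). -/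
/-- The first Koszul flattening `T_k^∧1 : V* ⊗ Λ²V* → Λ²V* ⊗ V*` in coordinates:
an element of `V* ⊗ V* ⊗ V*` with coordinates `F a p q` is sent to its
skew-symmetrization in the first two factors, `(c,d,q) ↦ F c d q - F d c q`. -/
noncomputable def koszul (k : ℕ) :
    (Fin k → Fin k → Fin k → ℂ) →ₗ[ℂ] (Fin k → Fin k → Fin k → ℂ) where
  toFun F := fun c d q => F c d q - F d c q
  map_add' F G := by funext c d q; simp only [Pi.add_apply]; ring
  map_smul' r F := by funext c d q; simp only [Pi.smul_apply, smul_eq_mul,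
    RingHom.id_apply]; ring

/-- The domain `V* ⊗ Λ²V*`: tensors antisymmetric in the last two indices. -/
noncomputable def domSub (k : ℕ) : Submodule ℂ (Fin k → Fin k → Fin k → ℂ) where
  carrier := {F | ∀ a p q, F a p q = - F a q p}
  add_mem' := by
    intro F G hF hG a p q
    simp only [Pi.add_apply, hF a p q, hG a p q]; ring
  zero_mem' := by intro a p q; simp
  smul_mem' := by
    intro r F hF a p q
    simp only [Pi.smul_apply, smul_eq_mul, hF a p q]; ring

/-- The codomain `Λ²V* ⊗ V*`: tensors antisymmetric in the first two indices. -/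
noncomputable def codSub (k : ℕ) : Submodule ℂ (Fin k → Fin k → Fin k → ℂ) where
  carrier := {G | ∀ c d q, G c d q = - G d c q}
  add_mem' := by
    intro F G hF hG c d q
    simp only [Pi.add_apply, hF c d q, hG c d q]; ring
  zero_mem' := by intro c d q; simp
  smul_mem' := by
    intro r F hF c d q
    simp only [Pi.smul_apply, smul_eq_mul, hF c d q]; ring

lemma koszul_map_domSub_le_codSub (k : ℕ) : (domSub k).map (koszul k) ≤ codSub k := by
  rintro _ ⟨F, -, rfl⟩ c d q
  show F c d q - F d c q = -(F d c q - F c d q)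
  ring

lemma codSub_le_koszul_map_domSub (k : ℕ) : codSub k ≤ (domSub k).map (koszul k) := by
  intro G hG
  -- under skew-symmetrization in the first two indices the last two terms cancel
  refine ⟨fun a p q => (G a p q - G a q p - G p q a) / 2, fun a p q => ?_, ?_⟩
  · show (G a p q - G a q p - G p q a) / 2 = -((G a q p - G a p q - G q p a) / 2)
    rw [hG q p a]; ring
  · funext c d q
    show (G c d q - G c q d - G d q c) / 2 - (G d c q - G d q c - G c q d) / 2 = G c d q
    rw [hG d c q]; ring

lemma koszul_map_domSub (k : ℕ) : (domSub k).map (koszul k) = codSub k :=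
  le_antisymm (koszul_map_domSub_le_codSub k) (codSub_le_koszul_map_domSub k)

lemma apply_self_eq_zero_of_mem_codSub {k : ℕ} {G : Fin k → Fin k → Fin k → ℂ}
    (hG : G ∈ codSub k) (c q : Fin k) : G c c q = 0 := by
  linear_combination hG c c q / 2

noncomputable def codSubEquivFun (k : ℕ) :
    codSub k ≃ₗ[ℂ] ({p : Fin k × Fin k // p.1 < p.2} × Fin k → ℂ) where
  toFun G x := (G : Fin k → Fin k → Fin k → ℂ) x.1.1.1 x.1.1.2 x.2
  map_add' _ _ := rfl
  map_smul' _ _ := rfl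
  invFun f := ⟨fun c d q =>
      if h : c < d then f (⟨(c, d), h⟩, q)
      else if h' : d < c then -f (⟨(d, c), h'⟩, q) else 0, by
    intro c d q
    rcases lt_trichotomy c d with h | rfl | h
    · simp [h, h.not_gt]
    · simp
    · simp [h, h.not_gt]⟩
  left_inv G := by
    apply Subtype.ext
    funext c d q
    rcases lt_trichotomy c d with h | rfl | h
    · simp [h]
    · simp [apply_self_eq_zero_of_mem_codSub G.2]
    · simp [h, h.not_gt, G.2 c d q]
  right_inv f := by
    funext ⟨⟨⟨c, d⟩, h⟩, q⟩
    simp [h]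

lemma card_subtype_fst_lt_snd (α : Type*) [Fintype α] [LinearOrder α] :
    Fintype.card {p : α × α // p.1 < p.2} = (Fintype.card α).choose 2 := by
  rw [Fintype.card_subtype, Fintype.card_product_filter_lt]

lemma finrank_codSub (k : ℕ) : Module.finrank ℂ (codSub k) = k * k.choose 2 := by
  rw [(codSubEquivFun k).finrank_eq, Module.finrank_fintype_fun_eq_card, Fintype.card_prod,
    card_subtype_fst_lt_snd, Fintype.card_fin, Nat.mul_comm]

theorem stmt16_general (k : ℕ) :
    (domSub k).map (koszul k) = codSub k ∧
      Module.finrank ℂ ((domSub k).map (koszul k)) = k * k.choose 2 := by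
  rw [koszul_map_domSub]
  exact ⟨rfl, finrank_codSub k⟩

theorem stmt16 (k : ℕ) (hk : 2 ≤ k) :
    (domSub k).map (koszul k) = codSub k ∧
      Module.finrank ℂ ((domSub k).map (koszul k)) = k * k.choose 2 :=
  stmt16_general k
end

section
/- For all integers a,b ≥ 0, the constant rank r = C(a+b+4,3) − C(a+3,3) − C(b+3,3) satisfies r < min(m,n), where m = (a+b+3)(a+1)(b+2)/2 and n = (a+b+3)(a+2)(b+1)/2; consequently ⌈m·n/r⌉ > max(m,n). -/
/-!
In closed form `r = (a+1)(b+1)(a+b+4)/2`, and then `m = r + (a+1)(a+2)/2` and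
`n = r + (b+1)(b+2)/2`, so `0 < r < min m n`. Since `m * n = max m n * min m n`, dividing by
`r < min m n` gives `m * n / r > max m n`, and the ceiling only increases it.
-/

lemma cast_choose_three_add_three {K : Type*} [Field K] [CharZero K] (k : ℕ) :
    ((k + 3).choose 3 : K) = (k + 1) * (k + 2) * (k + 3) / 6 := by
  rw [Nat.cast_choose K (by omega : 3 ≤ k + 3), Nat.add_sub_cancel]
  have hk : (k.factorial : K) ≠ 0 := Nat.cast_ne_zero.2 k.factorial_ne_zero
  simp only [Nat.factorial_succ, Nat.cast_mul, Nat.cast_succ]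
  field_simp
  ring

lemma cast_choose_add_add_four_three_sub (a b : ℕ) :
    ((a + b + 4).choose 3 : ℚ) - (a + 3).choose 3 - (b + 3).choose 3
      = (a + 1) * (b + 1) * (a + b + 4) / 2 := by
  rw [show a + b + 4 = (a + b + 1) + 3 by ring, cast_choose_three_add_three,
    cast_choose_three_add_three, cast_choose_three_add_three]
  push_cast
  ring

lemma max_lt_ceil_mul_div {K : Type*} [Field K] [LinearOrder K] [IsStrictOrderedRing K]
    [FloorRing K] {m n r : K} (hr : 0 < r) (h : r < min m n) :
    max m n < ⌈m * n / r⌉ := by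
  have hmax : 0 < max m n := hr.trans (h.trans_le (min_le_max))
  calc max m n < m * n / r := by
        rw [lt_div_iff₀ hr, ← max_mul_min m n]
        exact mul_lt_mul_of_pos_left h hmax
    _ ≤ ⌈m * n / r⌉ := Int.le_ceil _

theorem stmt19 (a b : ℕ) (m n r : ℚ)
    (hm : m = ((a + b + 3) * (a + 1) * (b + 2) : ℚ) / 2)
    (hn : n = ((a + b + 3) * (a + 2) * (b + 1) : ℚ) / 2)
    (hr : r = ((a + b + 4).choose 3 : ℚ) - ((a + 3).choose 3 : ℚ) - ((b + 3).choose 3 : ℚ)) :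
    r < min m n ∧ max m n < (⌈m * n / r⌉ : ℚ) := by
  rw [cast_choose_add_add_four_three_sub] at hr
  have hm_sub : m - r = (a + 1) * (a + 2) / 2 := by rw [hm, hr]; ring
  have hn_sub : n - r = (b + 1) * (b + 2) / 2 := by rw [hn, hr]; ring
  have hr_pos : 0 < r := by rw [hr]; positivity
  have hr_lt : r < min m n := by
    refine lt_min ?_ ?_
    · linarith [show (0 : ℚ) < (a + 1) * (a + 2) / 2 by positivity]
    · linarith [show (0 : ℚ) < (b + 1) * (b + 2) / 2 by positivity]
  exact ⟨hr_lt, max_lt_ceil_mul_div hr_pos hr_lt⟩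
end
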